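/- Convolution formula: for every f ∈ 𝒜, exp(−X/(1−X)) ⋆ f = exp(X·𝒟(f)), where −X/(1−X) = −Σ_{i≥1} X^i ∈ X·A[[X]]. -/

import Mathlib

open PowerSeries

/-- Formal exponential: for `F` with zero constant coefficient this is
`exp F = ∑ F^k / k!` (each coefficient is a finite sum). -/
noncomputable def pexp {A : Type*} [CommRing A] [Algebra ℚ A] (F : PowerSeries A) :
    PowerSeries A :=
  PowerSeries.mk fun n =>
    ∑ k ∈ Finset.range (n + 1), ((k.factorial : ℚ)⁻¹) • (PowerSeries.coeff n (F ^ k))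

/-- Formal logarithm: for `f` with constant coefficient `1` this is
`log f = ∑_{k≥1} (-1)^{k+1} (f-1)^k / k`; it is the inverse bijection of `pexp`
between `X·A[[X]]` and `𝒜 = 1 + X·A[[X]]`. -/
noncomputable def plog {A : Type*} [CommRing A] [Algebra ℚ A] (f : PowerSeries A) :
    PowerSeries A :=
  PowerSeries.mk fun n =>
    if n = 0 then 0 else
      ∑ k ∈ Finset.range (n + 1), (((-1 : ℚ) ^ (k + 1)) / k) • (PowerSeries.coeff n ((f - 1) ^ k))

/-- The eñe product: if `f = exp (∑_{i≥1} Fᵢ Xⁱ)` and `g = exp (∑_{i≥1} Gᵢ Xⁱ)` then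
`f ⋆ g = exp (−∑_{i≥1} i·Fᵢ·Gᵢ·Xⁱ)`. -/
noncomputable def ene {A : Type*} [CommRing A] [Algebra ℚ A] (f g : PowerSeries A) :
    PowerSeries A :=
  pexp (PowerSeries.mk fun i =>
    -(i : A) * (PowerSeries.coeff i (plog f)) * (PowerSeries.coeff i (plog g)))

/-- Logarithmic derivative `𝒟 f = f′·f⁻¹` (for `f` with constant coefficient `1`). -/
noncomputable def logD {A : Type*} [CommRing A] (f : PowerSeries A) : PowerSeries A :=
  PowerSeries.derivativeFun f * PowerSeries.invOfUnit f 1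

/-! ### Auxiliary lemmas -/

open Finset

section Aux

variable {A : Type*} [CommRing A] [Algebra ℚ A]

omit [Algebra ℚ A] in
lemma coeff_derivativeFun_old (f : PowerSeries A) (n : ℕ) :
    coeff n (derivativeFun f) = coeff (n + 1) f * (n + 1) :=
  coeff_derivative f n

/-- In a `ℚ`-algebra one can cancel multiplication by `n + 1`. -/
lemma cancel_succ (n : ℕ) {a b : A} (h : a * ((n : A) + 1) = b * ((n : A) + 1)) : a = b := by
  have halg : ((n : A) + 1) = algebraMap ℚ A ((n : ℚ) + 1) := by
    rw [map_add, map_natCast, map_one]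
  have key : ∀ c : A, c * ((n : A) + 1) = ((n : ℚ) + 1) • c := by
    intro c; rw [halg, Algebra.smul_def, mul_comm]
  rw [key a, key b] at h
  have h2 := congrArg (fun x => ((n : ℚ) + 1)⁻¹ • x) h
  simpa [smul_smul, inv_mul_cancel₀ (show ((n:ℚ)+1) ≠ 0 by positivity)] using h2

omit [Algebra ℚ A] in
lemma coeff_pow_mul_eq_zero {F G : PowerSeries A} (hF : constantCoeff F = 0)
    {n k : ℕ} (h : n < k) : coeff n (F ^ k * G) = 0 := by
  have hd : (X : PowerSeries A) ^ k ∣ F ^ k * G :=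
    Dvd.dvd.mul_right (pow_dvd_pow_of_dvd (X_dvd_iff.mpr hF) k) G
  exact (X_pow_dvd_iff.mp hd) n h

omit [Algebra ℚ A] in
lemma coeff_pow_eq_zero {F : PowerSeries A} (hF : constantCoeff F = 0)
    {n k : ℕ} (h : n < k) : coeff n (F ^ k) = 0 := by
  simpa using coeff_pow_mul_eq_zero (G := 1) hF h

omit [Algebra ℚ A] in
lemma derivFun_pow (F : PowerSeries A) (k : ℕ) :
    derivativeFun (F ^ (k + 1)) = (k + 1) • (F ^ k * derivativeFun F) := by
  induction k with
  | zero => simp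
  | succ k ih =>
    rw [pow_succ, derivativeFun_mul, ih]
    simp only [smul_eq_mul, succ_nsmul, pow_succ]
    ring

lemma fact_inv_succ (k : ℕ) :
    (((k+1).factorial : ℚ))⁻¹ * ((k : ℚ) + 1) = ((k.factorial : ℚ))⁻¹ := by
  rw [Nat.factorial_succ]
  push_cast
  rw [mul_inv]
  rw [mul_comm (((k:ℚ)+1))⁻¹, mul_assoc,
    inv_mul_cancel₀ (show ((k:ℚ)+1) ≠ 0 by positivity), mul_one]

lemma constantCoeff_pexp (F : PowerSeries A) : constantCoeff (pexp F) = 1 := by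
  rw [← coeff_zero_eq_constantCoeff_apply]
  simp [pexp]

lemma coeff_plog (f : PowerSeries A) (n : ℕ) :
    coeff n (plog f) =
      ∑ k ∈ range (n + 1), (((-1 : ℚ) ^ (k + 1)) / k) • (coeff n ((f - 1) ^ k)) := by
  rcases n with _ | n
  · simp [plog]
  · simp [plog]

/-- Derivative of the formal exponential. -/
lemma pexp_deriv {F : PowerSeries A} (hF : constantCoeff F = 0) :
    derivativeFun (pexp F) = derivativeFun F * pexp F := by
  ext n
  rw [coeff_derivativeFun_old]
  have lhs : coeff (n+1) (pexp F) * ((n : A) + 1)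
      = ∑ k ∈ range (n + 1),
          ((k.factorial : ℚ))⁻¹ • coeff n (derivativeFun F * F ^ k) := by
    rw [pexp, coeff_mk, Finset.sum_mul]
    have step : ∀ k ∈ range (n + 2),
        ((k.factorial : ℚ))⁻¹ • coeff (n+1) (F ^ k) * ((n : A) + 1)
          = ((k.factorial : ℚ))⁻¹ • coeff n (derivativeFun (F ^ k)) := by
      intro k _
      rw [smul_mul_assoc, coeff_derivativeFun_old]
    rw [Finset.sum_congr rfl step, Finset.sum_range_succ']
    have h0 : ((Nat.factorial 0 : ℚ))⁻¹ • coeff n (derivativeFun (F ^ 0)) = 0 := by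
      simp [derivativeFun_one]
    rw [h0, add_zero]
    refine Finset.sum_congr rfl fun k _ => ?_
    rw [derivFun_pow, map_nsmul, ← Nat.cast_smul_eq_nsmul ℚ, smul_smul]
    push_cast
    rw [fact_inv_succ, mul_comm (F ^ k)]
  rw [lhs, coeff_mul]
  have expand : ∀ p ∈ antidiagonal n,
      coeff p.1 (derivativeFun F) * coeff p.2 (pexp F)
        = ∑ k ∈ range (n + 1),
            ((k.factorial : ℚ))⁻¹ • (coeff p.1 (derivativeFun F) * coeff p.2 (F ^ k)) := by
    intro p hp
    have hp2 : p.2 ≤ n := by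
      have := Finset.HasAntidiagonal.mem_antidiagonal.mp hp; omega
    rw [pexp, coeff_mk]
    have ext1 : ∑ k ∈ range (p.2 + 1), ((k.factorial : ℚ))⁻¹ • coeff p.2 (F ^ k)
        = ∑ k ∈ range (n + 1), ((k.factorial : ℚ))⁻¹ • coeff p.2 (F ^ k) := by
      refine Finset.sum_subset (Finset.range_subset_range.mpr (by omega)) ?_
      intro k _ hk
      rw [coeff_pow_eq_zero hF (by simpa using hk), smul_zero]
    rw [ext1, Finset.mul_sum]
    exact Finset.sum_congr rfl fun k _ => (mul_smul_comm _ _ _)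
  rw [Finset.sum_congr rfl expand, Finset.sum_comm]
  refine Finset.sum_congr rfl fun k _ => ?_
  rw [← Finset.smul_sum, ← coeff_mul]

lemma neg_one_pow_div_succ (k : ℕ) :
    ((-1 : ℚ) ^ (k + 1 + 1) / ((k : ℚ) + 1)) * ((k : ℚ) + 1) = (-1 : ℚ) ^ k := by
  rw [div_mul_cancel₀ _ (show ((k:ℚ)+1) ≠ 0 by positivity), pow_succ, pow_succ]
  ring

lemma plog_deriv_coeff (f : PowerSeries A) (n : ℕ) :
    coeff n (derivativeFun (plog f)) =
      ∑ k ∈ range (n + 1),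
        ((-1 : ℚ) ^ k) • coeff n ((f - 1) ^ k * derivativeFun (f - 1)) := by
  rw [coeff_derivativeFun_old, coeff_plog, Finset.sum_mul]
  have step : ∀ k ∈ range (n + 2),
      ((-1 : ℚ) ^ (k + 1) / k) • coeff (n+1) ((f-1) ^ k) * ((n : A) + 1)
        = ((-1 : ℚ) ^ (k + 1) / k) • coeff n (derivativeFun ((f-1) ^ k)) := by
    intro k _
    rw [smul_mul_assoc, coeff_derivativeFun_old]
  rw [Finset.sum_congr rfl step, Finset.sum_range_succ']
  have h0 : ((-1 : ℚ) ^ (0 + 1) / (0:ℕ)) • coeff n (derivativeFun ((f-1) ^ 0)) = 0 := by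
    norm_num
  rw [h0, add_zero]
  refine Finset.sum_congr rfl fun k _ => ?_
  rw [derivFun_pow, map_nsmul, ← Nat.cast_smul_eq_nsmul ℚ, smul_smul]
  push_cast
  rw [neg_one_pow_div_succ]

/-- The defining property of the formal logarithm:
`(log f)′ · f = f′` for `f` with constant coefficient `1`. -/
lemma plog_deriv_mul {f : PowerSeries A} (hf : constantCoeff f = 1) :
    derivativeFun (plog f) * f = derivativeFun f := by
  set u := f - 1 with hu_def
  have hu : constantCoeff u = 0 := by simp [hu_def, hf]
  have hdu : derivativeFun u = derivativeFun f := by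
    have : f = u + 1 := by rw [hu_def]; ring
    rw [this, derivativeFun_add, derivativeFun_one, add_zero]
  have hf' : f = 1 + u := by rw [hu_def]; ring
  have h1 : derivativeFun (plog f) * f
      = derivativeFun (plog f) + derivativeFun (plog f) * u := by
    rw [hf']; ring
  ext n
  rw [h1, map_add, plog_deriv_coeff, ← hu_def]
  have expand : coeff n (derivativeFun (plog f) * u)
      = ∑ k ∈ range (n + 1),
          ((-1 : ℚ) ^ k) • coeff n ((u ^ k * derivativeFun u) * u) := by
    rw [coeff_mul]
    have step : ∀ p ∈ antidiagonal n,
        coeff p.1 (derivativeFun (plog f)) * coeff p.2 u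
          = ∑ k ∈ range (n + 1),
              ((-1 : ℚ) ^ k) • (coeff p.1 (u ^ k * derivativeFun u) * coeff p.2 u) := by
      intro p hp
      have hp1 : p.1 ≤ n := by
        have := Finset.HasAntidiagonal.mem_antidiagonal.mp hp; omega
      rw [plog_deriv_coeff, ← hu_def]
      have ext1 : ∑ k ∈ range (p.1 + 1), ((-1:ℚ)^k) • coeff p.1 (u ^ k * derivativeFun u)
          = ∑ k ∈ range (n + 1), ((-1:ℚ)^k) • coeff p.1 (u ^ k * derivativeFun u) := by
        refine Finset.sum_subset (Finset.range_subset_range.mpr (by omega)) ?_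
        intro k _ hk
        rw [coeff_pow_mul_eq_zero hu (by simpa using hk), smul_zero]
      rw [ext1, Finset.sum_mul]
      exact Finset.sum_congr rfl fun k _ => (smul_mul_assoc _ _ _)
    rw [Finset.sum_congr rfl step, Finset.sum_comm]
    refine Finset.sum_congr rfl fun k _ => ?_
    rw [← Finset.smul_sum, ← coeff_mul]
  rw [expand]
  have rearr : ∀ k : ℕ, (u ^ k * derivativeFun u) * u = u ^ (k+1) * derivativeFun u := by
    intro k; rw [mul_right_comm, ← pow_succ]
  simp only [rearr]
  set a : ℕ → A := fun k => coeff n (u ^ k * derivativeFun u) with ha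
  have telescope :
      (∑ k ∈ range (n + 1), ((-1 : ℚ) ^ k) • a k)
        + ∑ k ∈ range (n + 1), ((-1 : ℚ) ^ k) • a (k + 1) = a 0 + ((-1:ℚ)^n) • a (n+1) := by
    rw [Finset.sum_range_succ' (fun k => ((-1 : ℚ) ^ k) • a k), Finset.sum_range_succ]
    have : ∀ k ∈ range n,
        ((-1 : ℚ) ^ (k+1)) • a (k + 1) = -(((-1 : ℚ) ^ k) • a (k + 1)) := by
      intro k _; rw [pow_succ]; simp [neg_smul]
    rw [Finset.sum_congr rfl this]
    simp [pow_zero, one_smul]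
    abel
  rw [telescope]
  have hzero : a (n+1) = 0 := coeff_pow_mul_eq_zero hu (by omega)
  rw [hzero, smul_zero, add_zero, ha]
  simp [hdu]

/-- Over a `ℚ`-algebra, a power series is determined by its derivative and constant term. -/
lemma eq_of_derivFun_eq {g h : PowerSeries A}
    (hd : derivativeFun g = derivativeFun h) (h0 : coeff 0 g = coeff 0 h) : g = h := by
  ext n
  rcases n with _ | n
  · exact h0
  · have h2 := congrArg (coeff n) hd
    rw [coeff_derivativeFun_old, coeff_derivativeFun_old] at h2
    exact cancel_succ n h2

/-- `plog` is a left inverse of `pexp` on series with zero constant coefficient. -/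
lemma plog_pexp {F : PowerSeries A} (hF : constantCoeff F = 0) : plog (pexp F) = F := by
  have h1 : constantCoeff (pexp F) = 1 := constantCoeff_pexp F
  have hunit : pexp F * invOfUnit (pexp F) 1 = 1 := mul_invOfUnit _ 1 (by simpa using h1)
  have hd : derivativeFun (plog (pexp F)) = derivativeFun F := by
    have h2 := plog_deriv_mul h1
    rw [pexp_deriv hF] at h2
    have h3 := congrArg (· * invOfUnit (pexp F) 1) h2
    simpa [mul_assoc, hunit] using h3
  refine eq_of_derivFun_eq hd ?_
  have hl : coeff 0 (plog (pexp F)) = 0 := by simp [plog]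
  have hr : coeff 0 F = 0 := by rw [coeff_zero_eq_constantCoeff_apply, hF]
  rw [hl, hr]

/-- The logarithmic derivative is the derivative of the formal logarithm. -/
lemma logD_eq {f : PowerSeries A} (hf : constantCoeff f = 1) :
    logD f = derivativeFun (plog f) := by
  have hunit : f * invOfUnit f 1 = 1 := mul_invOfUnit f 1 (by simpa using hf)
  rw [logD, ← plog_deriv_mul hf, mul_assoc, hunit, mul_one]

end Aux

/-- **Convolution formula**: for every `f ∈ 𝒜`,
`exp(−X/(1−X)) ⋆ f = exp(X·𝒟(f))`, where `−X/(1−X) = −∑_{i≥1} Xⁱ`. -/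
theorem ene_convolution_formula {A : Type*} [CommRing A] [Algebra ℚ A]
    (f : PowerSeries A) (hf : PowerSeries.constantCoeff f = 1) :
    ene (pexp (PowerSeries.mk fun i => if i = 0 then 0 else (-1 : A))) f =
      pexp (PowerSeries.X * logD f) := by
  set E : PowerSeries A := PowerSeries.mk fun i => if i = 0 then 0 else (-1 : A) with hE
  have hE0 : constantCoeff E = 0 := by
    rw [← coeff_zero_eq_constantCoeff_apply, hE, coeff_mk, if_pos rfl]
  have hplogE : plog (pexp E) = E := plog_pexp hE0
  unfold ene
  rw [hplogE]
  refine congrArg pexp ?_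
  rw [logD_eq hf]
  ext i
  rcases i with _ | i
  · simp
  · rw [coeff_mk, coeff_succ_X_mul, coeff_derivativeFun_old, hE, coeff_mk,
      if_neg (Nat.succ_ne_zero i)]
    push_cast
    ring
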